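/- Main theorem, part (b): Let r ∈ (0,1), λ > 0 with R = (r/(1-r))·e^λ > 1. Then the set Λ_R of pairs (x,y) ∈ (0,∞)² such that θ ↦ (1-r+r·e^θ)^x·(λ/(λ-θ))^y (θ < λ) is the Laplace transform of a probability measure on ℝ equals ℕ* × (0,∞), i.e., (x,y) ∈ Λ_R if and only if x is a positive integer. -/

import Mathlib

/-!
If `μ` has Laplace transform `φ(θ)^x (l/(l-θ))^y` on `θ < l`, with `φ(θ) = 1 - r + r e^θ`, then
`G(z) = (∫ e^{zt} dμ) (l - z)^y` is holomorphic on the half-plane `Re z < l` and equals `l^y φ^x`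
near `0`. Hence `G' φ = x φ' G` on the whole half-plane. When `R > 1` the half-plane contains the
simple zero `z₀ = log((1-r)/r) + iπ` of `φ`, and writing `G = (z - z₀)^m u` with `u(z₀) ≠ 0`
in that equation forces `x = m ∈ ℕ`. Conversely, for `x = n` the binomial law convolved with a
gamma law has the required transform.
-/

open MeasureTheory Real Filter Topology ProbabilityTheory
open Complex (slitPlane I ofReal_re ofReal_im)

section SimpleZero

variable {𝕜 : Type*} [NontriviallyNormedField 𝕜]

lemma sub_mul_deriv_sub_pow_mul {u : 𝕜 → 𝕜} {z z₀ : 𝕜} (m : ℕ) (hu : DifferentiableAt 𝕜 u z) :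
    (z - z₀) * deriv (fun w => (w - z₀) ^ m * u w) z =
      (z - z₀) ^ m * (m * u z + (z - z₀) * deriv u z) := by
  have hd : HasDerivAt (fun w => (w - z₀) ^ m * u w)
      (m * (z - z₀) ^ (m - 1) * 1 * u z + (z - z₀) ^ m * deriv u z) z :=
    (((hasDerivAt_id' z).sub_const z₀).pow m).mul hu.hasDerivAt
  rw [hd.deriv]
  rcases m with _ | m
  · simp
  · simp only [Nat.add_sub_cancel]; push_cast; ring

theorem AnalyticAt.natCast_eq_of_deriv_mul_eq [CompleteSpace 𝕜] {G φ : 𝕜 → 𝕜} {z₀ c : 𝕜}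
    {m : ℕ} (hG : AnalyticAt 𝕜 G z₀) (hφ : AnalyticAt 𝕜 φ z₀) (hφz₀ : φ z₀ = 0)
    (hφ' : deriv φ z₀ ≠ 0) (hm : analyticOrderAt G z₀ = m)
    (hode : ∀ᶠ z in 𝓝 z₀, deriv G z * φ z = c * deriv φ z * G z) : (m : 𝕜) = c := by
  obtain ⟨u, hu, hu₀, hGu⟩ := hG.analyticOrderAt_eq_natCast.mp hm
  have hφ_eq : ∀ z, φ z = (z - z₀) * dslope φ z₀ z := fun z => by
    rw [← smul_eq_mul, sub_smul_dslope, hφz₀, sub_zero]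
  have hG_deriv : ∀ᶠ z in 𝓝 z₀,
      (z - z₀) * deriv G z = (z - z₀) ^ m * (m * u z + (z - z₀) * deriv u z) := by
    have hGu' : G =ᶠ[𝓝 z₀] fun z => (z - z₀) ^ m • u z := hGu
    filter_upwards [hGu'.eventuallyEq_nhds, hu.eventually_analyticAt] with z hz hzu
    simp only [smul_eq_mul] at hz
    rw [hz.deriv_eq, sub_mul_deriv_sub_pow_mul m hzu.differentiableAt]
  -- Multiplying the equation by `z - z₀` and dividing by `(z - z₀) ^ (m + 1)` leaves a relation
  -- between functions continuous at `z₀`; at `z₀` it reads `m u(z₀) φ'(z₀) = c φ'(z₀) u(z₀)`.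
  have hpunct : ∀ᶠ z in 𝓝[≠] z₀,
      (m * u z + (z - z₀) * deriv u z) * dslope φ z₀ z - c * deriv φ z * u z = 0 := by
    filter_upwards [nhdsWithin_le_nhds (hode.and (hG_deriv.and hGu)), self_mem_nhdsWithin]
      with z ⟨hz, hz', hzu⟩ hne
    apply mul_left_cancel₀ (pow_ne_zero (m + 1) (sub_ne_zero.mpr hne))
    rw [hφ_eq, hzu, smul_eq_mul] at hz
    linear_combination (z - z₀) * hz - dslope φ z₀ z * (z - z₀) * hz'
  have hcont : ContinuousAt
      (fun z => (m * u z + (z - z₀) * deriv u z) * dslope φ z₀ z - c * deriv φ z * u z) z₀ := by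
    have := hu.deriv.continuousAt
    have := hφ.deriv.continuousAt
    have := hu.continuousAt
    have := continuousAt_dslope_same.mpr hφ.differentiableAt
    fun_prop
  have h₀ := tendsto_nhds_unique (hcont.tendsto.mono_left nhdsWithin_le_nhds)
    (tendsto_const_nhds.congr' (hpunct.mono fun z hz => hz.symm))
  rw [dslope_same, sub_self, zero_mul, add_zero] at h₀
  have hfactor : ((m : 𝕜) - c) * (u z₀ * deriv φ z₀) = 0 := by linear_combination h₀
  exact sub_eq_zero.mp ((mul_eq_zero.mp hfactor).resolve_right (mul_ne_zero hu₀ hφ'))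

end SimpleZero

theorem AnalyticAt.eventuallyEq_of_eventually_ofReal {f g : ℂ → ℂ} {a : ℝ}
    (hf : AnalyticAt ℂ f a) (hg : AnalyticAt ℂ g a) (h : ∀ᶠ t : ℝ in 𝓝 a, f t = g t) :
    f =ᶠ[𝓝 (a : ℂ)] g := by
  refine (hf.frequently_eq_iff_eventually_eq hg).mp ?_
  have hmaps : Tendsto ((↑) : ℝ → ℂ) (𝓝[≠] a) (𝓝[≠] (a : ℂ)) :=
    Complex.continuous_ofReal.continuousWithinAt.tendsto_nhdsWithin fun t ht => by
      simpa using ht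
  exact hmaps.frequently (h.filter_mono nhdsWithin_le_nhds).frequently

theorem AnalyticOnNhd.deriv_mul_eq_of_eventuallyEq_cpow {S : Set ℂ} {G φ : ℂ → ℂ} {z₁ a c : ℂ}
    (hG : AnalyticOnNhd ℂ G S) (hφ : AnalyticOnNhd ℂ φ S) (hS : IsPreconnected S) (hz₁ : z₁ ∈ S)
    (hφz₁ : φ z₁ ∈ slitPlane) (hGφ : G =ᶠ[𝓝 z₁] fun z => a * φ z ^ c) :
    Set.EqOn (fun z => deriv G z * φ z) (fun z => c * deriv φ z * G z) S := by
  refine (hG.deriv.mul hφ).eqOn_of_preconnected_of_eventuallyEq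
    ((analyticOnNhd_const.mul hφ.deriv).mul hG) hS hz₁ ?_
  have hslit : ∀ᶠ z in 𝓝 z₁, φ z ∈ slitPlane :=
    (hφ z₁ hz₁).continuousAt.eventually_mem (Complex.isOpen_slitPlane.mem_nhds hφz₁)
  filter_upwards [hGφ.eventuallyEq_nhds, hGφ, hslit, (hφ z₁ hz₁).eventually_analyticAt]
    with z hGz hGz' hz hφa
  have hφz : φ z ≠ 0 := Complex.slitPlane_ne_zero hz
  have hd := ((hφa.differentiableAt.hasDerivAt).cpow_const (c := c) hz).const_mul a
  rw [hGz.deriv_eq, hd.deriv, hGz', Complex.cpow_sub _ _ hφz, Complex.cpow_one]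
  field_simp

theorem AnalyticOnNhd.exists_natCast_eq_of_eventuallyEq_cpow {S : Set ℂ} {G φ : ℂ → ℂ}
    {z₀ z₁ a c : ℂ} (hG : AnalyticOnNhd ℂ G S) (hφ : AnalyticOnNhd ℂ φ S) (hSo : IsOpen S)
    (hS : IsPreconnected S) (hz₁ : z₁ ∈ S) (hφz₁ : φ z₁ ∈ slitPlane) (ha : a ≠ 0)
    (hGφ : G =ᶠ[𝓝 z₁] fun z => a * φ z ^ c) (hz₀ : z₀ ∈ S) (hφz₀ : φ z₀ = 0)
    (hφ'z₀ : deriv φ z₀ ≠ 0) : ∃ m : ℕ, (m : ℂ) = c := by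
  have hGz₁ : G z₁ ≠ 0 := by
    rw [hGφ.self_of_nhds]
    exact mul_ne_zero ha (by simp [Complex.cpow_eq_zero_iff, Complex.slitPlane_ne_zero hφz₁])
  obtain ⟨m, hm⟩ := ENat.ne_top_iff_exists.mp <|
    hG.analyticOrderAt_ne_top_of_isPreconnected hS hz₁ hz₀ <| by
      rw [(hG z₁ hz₁).analyticOrderAt_eq_zero.mpr hGz₁]; exact ENat.zero_ne_top
  exact ⟨m, (hG z₀ hz₀).natCast_eq_of_deriv_mul_eq (hφ z₀ hz₀) hφz₀ hφ'z₀ hm.symm <|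
    eventually_of_mem (hSo.mem_nhds hz₀) (hG.deriv_mul_eq_of_eventuallyEq_cpow hφ hS hz₁ hφz₁ hGφ)⟩

lemma integrable_exp_mul_of_lintegral_lt_top {μ : Measure ℝ} {θ : ℝ}
    (h : ∫⁻ t, ENNReal.ofReal (exp (θ * t)) ∂μ < ⊤) : Integrable (fun t => exp (θ * t)) μ :=
  ⟨by fun_prop, (hasFiniteIntegral_iff_ofReal (.of_forall fun _ => exp_nonneg _)).mpr h⟩

lemma analyticOnNhd_complexMGF_id_of_lintegral_lt_top {μ : Measure ℝ} {l : ℝ}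
    (h : ∀ θ < l, ∫⁻ t, ENNReal.ofReal (exp (θ * t)) ∂μ < ⊤) :
    AnalyticOnNhd ℂ (complexMGF id μ) {z | z.re < l} := by
  refine analyticOnNhd_complexMGF.mono fun z (hz : z.re < l) => ?_
  exact interior_maximal (fun θ hθ => integrable_exp_mul_of_lintegral_lt_top (h θ hθ))
    isOpen_Iio hz

lemma complexMGF_id_ofReal_of_lintegral_eq {μ : Measure ℝ} {θ M : ℝ} (hM : 0 ≤ M)
    (h : ∫⁻ t, ENNReal.ofReal (exp (θ * t)) ∂μ = ENNReal.ofReal M) :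
    complexMGF id μ θ = M := by
  rw [complexMGF_ofReal, mgf, integral_eq_lintegral_of_nonneg_ae
    (.of_forall fun _ => exp_nonneg _) (by fun_prop)]
  simp [h, hM]

lemma complexMGF_id_mul_cpow_ofReal {μ : Measure ℝ} {r l x y θ : ℝ} (hr₀ : 0 ≤ r) (hr₁ : r ≤ 1)
    (hl : 0 < l) (hθ : θ < l)
    (h : ∫⁻ t, ENNReal.ofReal (exp (θ * t)) ∂μ =
      ENNReal.ofReal ((1 - r + r * exp θ) ^ x * (l / (l - θ)) ^ y)) :
    complexMGF id μ θ * (l - θ) ^ (y : ℂ) =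
      (l : ℂ) ^ (y : ℂ) * (1 - r + r * Complex.exp θ) ^ (x : ℂ) := by
  have hlθ : 0 < l - θ := by linarith
  have hbase : 0 ≤ 1 - r + r * exp θ := by nlinarith [exp_pos θ]
  have hbase' : 1 - r + r * Complex.exp θ = ((1 - r + r * exp θ : ℝ) : ℂ) := by
    push_cast [Complex.ofReal_exp]; rfl
  rw [complexMGF_id_ofReal_of_lintegral_eq (by positivity) h, hbase', ← Complex.ofReal_sub,
    ← Complex.ofReal_cpow hlθ.le, ← Complex.ofReal_cpow hl.le, ← Complex.ofReal_cpow hbase]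
  norm_cast
  rw [div_rpow hl.le hlθ.le]
  field_simp

lemma exists_re_lt_one_sub_add_mul_cexp_eq_zero {r l : ℝ} (hr : r ∈ Set.Ioo (0:ℝ) 1)
    (hR : 1 < r / (1 - r) * exp l) :
    ∃ z₀ : ℂ, z₀.re < l ∧ 1 - r + r * Complex.exp z₀ = 0 := by
  obtain ⟨hr0, hr1⟩ := hr
  have h1r : 0 < 1 - r := by linarith
  refine ⟨Real.log ((1 - r) / r) + π * I, ?_, ?_⟩
  · simp only [Complex.add_re, ofReal_re, Complex.mul_re, Complex.I_re, mul_zero, ofReal_im,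
      Complex.I_im, mul_one, sub_self, add_zero]
    rw [Real.log_lt_iff_lt_exp (by positivity), div_lt_iff₀ hr0]
    rw [div_mul_eq_mul_div, one_lt_div h1r] at hR
    linarith
  · rw [Complex.exp_add, Complex.exp_pi_mul_I, ← Complex.ofReal_exp, Real.exp_log (by positivity)]
    have hr0' : (r : ℂ) ≠ 0 := by exact_mod_cast hr0.ne'
    push_cast
    field_simp
    ring

theorem exists_nat_eq_of_lintegral_exp_eq {r l x y : ℝ} (hr : r ∈ Set.Ioo (0:ℝ) 1) (hl : 0 < l)
    (hR : 1 < r / (1 - r) * exp l) (hx : 0 < x) {μ : Measure ℝ}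
    (hL : ∀ θ : ℝ, θ < l → ∫⁻ t, ENNReal.ofReal (exp (θ * t)) ∂μ =
      ENNReal.ofReal ((1 - r + r * exp θ) ^ x * (l / (l - θ)) ^ y)) :
    ∃ n : ℕ, 0 < n ∧ x = n := by
  set S : Set ℂ := {z | z.re < l}
  set φ : ℂ → ℂ := fun z => 1 - r + r * Complex.exp z
  set G : ℂ → ℂ := fun z => complexMGF id μ z * (l - z) ^ (y : ℂ)
  have h0S : (0 : ℂ) ∈ S := hl
  have hφ : AnalyticOnNhd ℂ φ S := fun z _ => by fun_prop
  have hG : AnalyticOnNhd ℂ G S := by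
    refine (analyticOnNhd_complexMGF_id_of_lintegral_lt_top fun θ hθ => ?_).mul fun z hz => ?_
    · rw [hL θ hθ]; exact ENNReal.ofReal_lt_top
    · exact (analyticAt_const.sub analyticAt_id).cpow analyticAt_const (Or.inl (by simpa using hz))
  have hG_real : ∀ θ : ℝ, θ < l → G θ = (l : ℂ) ^ (y : ℂ) * φ θ ^ (x : ℂ) := fun θ hθ =>
    complexMGF_id_mul_cpow_ofReal hr.1.le hr.2.le hl hθ (hL θ hθ)
  have hφ0 : φ 0 ∈ slitPlane := by simp [φ]
  have hG_near0 : G =ᶠ[𝓝 0] fun z => (l : ℂ) ^ (y : ℂ) * φ z ^ (x : ℂ) := by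
    have h := (hG 0 h0S).eventuallyEq_of_eventually_ofReal (a := 0)
      (analyticAt_const.mul ((hφ 0 h0S).cpow analyticAt_const hφ0))
      ((eventually_lt_nhds hl).mono hG_real)
    rwa [Complex.ofReal_zero] at h
  obtain ⟨z₀, hz₀S, hφz₀⟩ := exists_re_lt_one_sub_add_mul_cexp_eq_zero hr hR
  have hφ'z₀ : deriv φ z₀ ≠ 0 := by
    rw [(((Complex.hasDerivAt_exp z₀).const_mul (r : ℂ)).const_add (1 - r : ℂ)).deriv]
    exact mul_ne_zero (Complex.ofReal_ne_zero.mpr hr.1.ne') (Complex.exp_ne_zero _)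
  obtain ⟨m, hmx⟩ := hG.exists_natCast_eq_of_eventuallyEq_cpow hφ
    (isOpen_lt Complex.continuous_re continuous_const) (convex_halfSpace_re_lt l).isPreconnected
    h0S hφ0 (by simp [Complex.cpow_eq_zero_iff, hl.ne']) hG_near0 hz₀S hφz₀ hφ'z₀
  have hxm : x = m := by exact_mod_cast hmx.symm
  exact ⟨m, by exact_mod_cast hxm ▸ hx, hxm⟩

lemma lintegral_exp_mul_conv (μ ν : Measure ℝ) [SFinite ν] (θ : ℝ) :
    ∫⁻ t, ENNReal.ofReal (exp (θ * t)) ∂(μ ∗ ν) =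
      (∫⁻ t, ENNReal.ofReal (exp (θ * t)) ∂μ) * ∫⁻ t, ENNReal.ofReal (exp (θ * t)) ∂ν := by
  have hsplit : ∀ s t : ℝ, ENNReal.ofReal (exp (θ * (s + t))) =
      ENNReal.ofReal (exp (θ * s)) * ENNReal.ofReal (exp (θ * t)) := fun s t => by
    rw [← ENNReal.ofReal_mul (exp_nonneg _), ← exp_add, mul_add]
  rw [Measure.lintegral_conv (f := fun t => ENNReal.ofReal (exp (θ * t))) (by fun_prop)]
  simp_rw [hsplit, lintegral_const_mul' _ _ ENNReal.ofReal_ne_top]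
  exact lintegral_mul_const _ (by fun_prop)

lemma lintegral_exp_mul_map_cast_binomial (n : ℕ) (p : unitInterval) (θ : ℝ) :
    ∫⁻ t, ENNReal.ofReal (exp (θ * t)) ∂Bin(ℝ, n, p) =
      ENNReal.ofReal ((1 - p + p * exp θ) ^ n) := by
  rw [← ofReal_integral_eq_lintegral_ofReal (integrable_map_cast_binomial _)
    (.of_forall fun t => exp_nonneg _), integral_map_cast_binomial, add_comm, add_pow]
  congr 1
  refine Finset.sum_congr ?_ fun k _ => ?_
  · ext; simp
  · rw [smul_eq_mul, mul_pow, ← exp_nat_mul]; ring_nf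

lemma lintegral_exp_mul_gammaMeasure {a l θ : ℝ} (ha : 0 < a) (hl : 0 < l) (hθ : θ < l) :
    ∫⁻ t, ENNReal.ofReal (exp (θ * t)) ∂(gammaMeasure a l) =
      ENNReal.ofReal ((l / (l - θ)) ^ a) := by
  have hlθ : 0 < l - θ := by linarith
  -- Tilting the rate-`l` gamma density by `exp (θ t)` gives a multiple of the rate-`(l - θ)` one.
  have htilt : ∀ t : ℝ, gammaPDF a l t * ENNReal.ofReal (exp (θ * t)) =
      ENNReal.ofReal ((l / (l - θ)) ^ a) * gammaPDF a (l - θ) t := fun t => by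
    rcases le_or_gt 0 t with ht | ht
    · rw [gammaPDF_of_nonneg ht, gammaPDF_of_nonneg ht, ← ENNReal.ofReal_mul (by positivity),
        ← ENNReal.ofReal_mul (by positivity), div_rpow hl.le hlθ.le]
      have hΓ : 0 < Gamma a := Gamma_pos_of_pos ha
      have hpow : 0 < (l - θ) ^ a := rpow_pos_of_pos hlθ a
      congr 1
      field_simp
      rw [mul_assoc, ← exp_add]
      ring_nf
    · rw [gammaPDF_of_neg ht, gammaPDF_of_neg ht, zero_mul, mul_zero]
  have hmeas : Measurable (gammaPDF a l) := (measurable_gammaPDFReal a l).ennreal_ofReal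
  rw [gammaMeasure, lintegral_withDensity_eq_lintegral_mul _ hmeas (by fun_prop)]
  simp_rw [Pi.mul_apply, htilt]
  rw [lintegral_const_mul' _ _ ENNReal.ofReal_ne_top, lintegral_gammaPDF_eq_one ha hlθ, mul_one]

lemma lintegral_exp_mul_binomial_conv_gammaMeasure (n : ℕ) (p : unitInterval) {a l θ : ℝ}
    (ha : 0 < a) (hl : 0 < l) (hθ : θ < l) :
    ∫⁻ t, ENNReal.ofReal (exp (θ * t)) ∂(Bin(ℝ, n, p) ∗ gammaMeasure a l) =
      ENNReal.ofReal ((1 - p + p * exp θ) ^ n * (l / (l - θ)) ^ a) := by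
  have hbase : 0 ≤ 1 - (p : ℝ) + p * exp θ := by
    nlinarith [unitInterval.nonneg p, unitInterval.le_one p, exp_pos θ]
  have := isProbabilityMeasure_gammaMeasure ha hl
  rw [lintegral_exp_mul_conv, lintegral_exp_mul_map_cast_binomial,
    lintegral_exp_mul_gammaMeasure ha hl hθ, ENNReal.ofReal_mul (by positivity)]

theorem main_theorem_part_b
    (r l : ℝ) (hr : r ∈ Set.Ioo (0:ℝ) 1) (hl : 0 < l)
    (hR : 1 < r / (1 - r) * Real.exp l) :
    {p : ℝ × ℝ | 0 < p.1 ∧ 0 < p.2 ∧ ∃ μ : Measure ℝ, IsProbabilityMeasure μ ∧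
        ∀ θ : ℝ, θ < l →
          ∫⁻ t, ENNReal.ofReal (Real.exp (θ * t)) ∂μ =
            ENNReal.ofReal ((1 - r + r * Real.exp θ) ^ p.1 * (l / (l - θ)) ^ p.2)} =
      {p : ℝ × ℝ | (∃ n : ℕ, 0 < n ∧ p.1 = (n : ℝ)) ∧ 0 < p.2} := by
  ext ⟨x, y⟩
  simp only [Set.mem_ofPred_eq]
  constructor
  · rintro ⟨hx, hy, μ, -, hL⟩
    exact ⟨exists_nat_eq_of_lintegral_exp_eq hr hl hR hx hL, hy⟩
  · rintro ⟨⟨n, hn, rfl⟩, hy⟩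
    have := isProbabilityMeasure_gammaMeasure hy hl
    refine ⟨Nat.cast_pos.mpr hn, hy, Bin(ℝ, n, ⟨r, hr.1.le, hr.2.le⟩) ∗ gammaMeasure y l,
      inferInstance, fun θ hθ => ?_⟩
    rw [lintegral_exp_mul_binomial_conv_gammaMeasure n _ hy hl hθ, rpow_natCast]
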